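/- arXiv:1201.4116 — 8 statements merged into one kernel-verified Lean document; each statement's English description precedes it below -/
import Mathlib

section
/- Fix cells i ≠ k with n ≥ 2, and fix nonnegative values ρ_h ≥ 0 for all cells h ∉ {i,k}. Then the one-variable function t ↦ f_i(ρ) obtained by setting ρ_k = t (t ≥ 0) is differentiable, and its derivative tends to ln(2)·Σ_{j∈J_i} b_{ikj}/a_{ij} as t → ∞. -/
/-! On the ray `ρ_k = t ≥ 0` every pixel term of `f_i` has the form
`1 / (a · log₂ (1 + 1 / x))` with `x = b t + C`, `C > 0`, and `b > 0`. Since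
`d/dx log (1 + 1/x) = -1 / (x (x + 1))`, its derivative in `t` is
`(b / a) · ln 2 / (x (x + 1) log (1 + 1/x)²)`, and `x log (1 + 1/x) → 1` as `x → ∞`
makes this tend to `ln 2 · b / a`. -/

open Real Filter Topology Finset

lemma Finset.sum_mul_update_of_mem {ι R : Type*} [DecidableEq ι] [NonUnitalNonAssocSemiring R]
    {s : Finset ι} {k : ι} (hk : k ∈ s) (w ρ : ι → R) (t : R) :
    ∑ h ∈ s, w h * Function.update ρ k t h = w k * t + ∑ h ∈ s.erase k, w h * ρ h := by
  rw [← add_sum_erase _ _ hk, Function.update_self]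
  congr 1
  exact sum_congr rfl fun h hh => by rw [Function.update_of_ne (ne_of_mem_erase hh)]

lemma hasDerivAt_log_one_add_one_div {x : ℝ} (hx : 0 < x) :
    HasDerivAt (fun x => log (1 + 1 / x)) (-1 / (x * (x + 1))) x := by
  have h := ((hasDerivAt_inv hx.ne').const_add 1).log (by positivity)
  simp only [one_div] at h ⊢
  convert h using 1
  field_simp

lemma tendsto_mul_mul_log_one_add_one_div_sq :
    Tendsto (fun x : ℝ => x * (x + 1) * log (1 + 1 / x) ^ 2) atTop (𝓝 1) := by
  have hxL : Tendsto (fun x : ℝ => x * log (1 + 1 / x)) atTop (𝓝 1) :=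
    tendsto_mul_log_one_add_div_atTop 1
  have hL : Tendsto (fun x : ℝ => log (1 + 1 / x)) atTop (𝓝 0) := by
    have h1 : Tendsto (fun x : ℝ => 1 + 1 / x) atTop (𝓝 1) := by
      simpa only [one_div, add_zero] using tendsto_inv_atTop_zero.const_add (1 : ℝ)
    simpa only [Function.comp_def, log_one] using (continuousAt_log one_ne_zero).tendsto.comp h1
  have h := hxL.mul (hxL.add hL)
  rw [add_zero, mul_one] at h
  exact h.congr fun x => by ring

lemma hasDerivAt_inv_logb_two_one_add_one_div {x : ℝ} (hx : 0 < x) :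
    HasDerivAt (fun x => (logb 2 (1 + 1 / x))⁻¹)
      (log 2 / (x * (x + 1) * log (1 + 1 / x) ^ 2)) x := by
  have hL : log (1 + 1 / x) ≠ 0 := (log_pos (by simp [hx])).ne'
  have h := ((hasDerivAt_log_one_add_one_div hx).inv hL).const_mul (log 2)
  have hsplit : (fun x => (logb 2 (1 + 1 / x))⁻¹) = fun x => log 2 * (log (1 + 1 / x))⁻¹ := by
    ext y
    rw [logb, inv_div, div_eq_mul_inv]
  rw [hsplit]
  exact h.congr_deriv (by field_simp)

lemma tendsto_log_two_div_mul_mul_log_one_add_one_div_sq :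
    Tendsto (fun x : ℝ => log 2 / (x * (x + 1) * log (1 + 1 / x) ^ 2)) atTop (𝓝 (log 2)) := by
  have h := (tendsto_const_nhds (x := log 2)).div tendsto_mul_mul_log_one_add_one_div_sq one_ne_zero
  rw [div_one] at h
  exact h

lemma hasDerivAt_one_div_mul_logb_two_one_add_one_div_affine {A B C t : ℝ}
    (hx : 0 < B * t + C) :
    HasDerivAt (fun t => 1 / (A * logb 2 (1 + 1 / (B * t + C))))
      (B / A * (log 2 /
        ((B * t + C) * (B * t + C + 1) * log (1 + 1 / (B * t + C)) ^ 2))) t := by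
  have haffine : HasDerivAt (fun t => B * t + C) B t := by
    simpa using ((hasDerivAt_id t).const_mul B).add_const C
  have h := ((hasDerivAt_inv_logb_two_one_add_one_div hx).comp t haffine).const_mul A⁻¹
  have hsplit : (fun t => 1 / (A * logb 2 (1 + 1 / (B * t + C)))) =
      fun t => A⁻¹ * (logb 2 (1 + 1 / (B * t + C)))⁻¹ := by
    ext t
    rw [one_div, mul_inv]
  rw [hsplit]
  exact h.congr_deriv (by ring)

theorem stmt_0_general
    (n : ℕ)
    (J : Fin n → Finset ℕ)
    (a c : Fin n → ℕ → ℝ) (b : Fin n → Fin n → ℕ → ℝ)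
    (hc : ∀ i, ∀ j ∈ J i, 0 < c i j)
    (hb : ∀ i k, k ≠ i → ∀ j ∈ J i, 0 < b i k j)
    (f : Fin n → (Fin n → ℝ) → ℝ)
    (hf : ∀ i ρ, f i ρ =
      ∑ j ∈ J i, 1 / (a i j * Real.logb 2
        (1 + 1 / (∑ k ∈ Finset.univ.erase i, b i k j * ρ k + c i j))))
    (i k : Fin n) (hik : i ≠ k) (ρ : Fin n → ℝ)
    (hρ : ∀ h : Fin n, h ≠ i → h ≠ k → 0 ≤ ρ h) :
    (∀ t : ℝ, 0 ≤ t →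
      DifferentiableAt ℝ (fun t : ℝ => f i (Function.update ρ k t)) t) ∧
    Filter.Tendsto (deriv (fun t : ℝ => f i (Function.update ρ k t)))
      Filter.atTop (nhds (Real.log 2 * ∑ j ∈ J i, b i k j / a i j)) := by
  set C : ℕ → ℝ := fun j => ∑ h ∈ (univ.erase i).erase k, b i h j * ρ h + c i j
  have hC : ∀ j ∈ J i, 0 < C j := fun j hj =>
    add_pos_of_nonneg_of_pos (sum_nonneg fun h hh => by
      obtain ⟨hhk, hhi⟩ := mem_erase.1 hh
      exact mul_nonneg (hb i h (ne_of_mem_erase hhi) j hj).le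
        (hρ h (ne_of_mem_erase hhi) hhk)) (hc i j hj)
  have hsection : (fun t => f i (Function.update ρ k t)) =
      fun t => ∑ j ∈ J i, 1 / (a i j * logb 2 (1 + 1 / (b i k j * t + C j))) := by
    ext t
    rw [hf]
    refine sum_congr rfl fun j _ => ?_
    rw [sum_mul_update_of_mem (mem_erase.2 ⟨hik.symm, mem_univ k⟩), add_assoc]
  have hderiv (t : ℝ) (ht : 0 ≤ t) := HasDerivAt.fun_sum fun j hj =>
    hasDerivAt_one_div_mul_logb_two_one_add_one_div_affine (A := a i j)
      (add_pos_of_nonneg_of_pos (mul_nonneg (hb i k hik.symm j hj).le ht) (hC j hj))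
  rw [hsection]
  refine ⟨fun t ht => (hderiv t ht).differentiableAt, ?_⟩
  rw [mul_comm, sum_mul]
  refine Tendsto.congr' ((eventually_ge_atTop 0).mono fun t ht => (hderiv t ht).deriv.symm)
    (tendsto_finsetSum _ fun j hj => ?_)
  have hx : Tendsto (fun t => b i k j * t + C j) atTop atTop :=
    tendsto_atTop_add_const_right _ _ (tendsto_id.const_mul_atTop (hb i k hik.symm j hj))
  exact (tendsto_log_two_div_mul_mul_log_one_add_one_div_sq.comp hx).const_mul _

/-- The one-variable section of the load function `f i` in the variable `ρ k`
(for `k ≠ i`) is differentiable for nonnegative arguments, and its derivative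
tends to `ln 2 · Σ_{j ∈ J i} b i k j / a i j` as the argument tends to infinity. -/
theorem stmt_0
    (n : ℕ) (hn : 2 ≤ n)
    (J : Fin n → Finset ℕ) (hJ : ∀ i, (J i).Nonempty)
    (a c : Fin n → ℕ → ℝ) (b : Fin n → Fin n → ℕ → ℝ)
    (ha : ∀ i, ∀ j ∈ J i, 0 < a i j)
    (hc : ∀ i, ∀ j ∈ J i, 0 < c i j)
    (hb : ∀ i k, k ≠ i → ∀ j ∈ J i, 0 < b i k j)
    (f : Fin n → (Fin n → ℝ) → ℝ)
    (hf : ∀ i ρ, f i ρ =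
      ∑ j ∈ J i, 1 / (a i j * Real.logb 2
        (1 + 1 / (∑ k ∈ Finset.univ.erase i, b i k j * ρ k + c i j))))
    (i k : Fin n) (hik : i ≠ k) (ρ : Fin n → ℝ)
    (hρ : ∀ h : Fin n, h ≠ i → h ≠ k → 0 ≤ ρ h) :
    (∀ t : ℝ, 0 ≤ t →
      DifferentiableAt ℝ (fun t : ℝ => f i (Function.update ρ k t)) t) ∧
    Filter.Tendsto (deriv (fun t : ℝ => f i (Function.update ρ k t)))
      Filter.atTop (nhds (Real.log 2 * ∑ j ∈ J i, b i k j / a i j)) :=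
  stmt_0_general n J a c b hc hb f hf i k hik ρ hρ
end

section
/- (Strict radial quasiconcavity) For each cell i, if a nonnegative vector ρ ∈ ℝ_{≥0}^n satisfies f_i(ρ) = ρ_i, then for every λ ∈ (0,1) one has f_i(λ·ρ) > λ·ρ_i. -/
/-! Each summand of `f i` is `t ↦ 1 / (a log₂(1 + 1/(t + c)))` evaluated at an interference
level `t ≥ 0` that scales linearly with `ρ`. Bernoulli's inequality `(1 + x/λ)^λ ≤ 1 + x`
gives `λ log(1 + x/λ) ≤ log(1 + x)`, and since `c > 0` the noise term makes
`λ t + c > λ (t + c)`, which turns this into the strict inequality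
`λ log₂(1 + 1/(λ t + c)) < log₂(1 + 1/(t + c))`, i.e. `λ` times each summand at `ρ` is below
the summand at `λ ρ`. Summing over the nonempty pixel set and using `f i ρ = ρ i` concludes. -/

open Real

lemma mul_log_one_add_div_le {x l : ℝ} (hx : 0 ≤ x) (hl0 : 0 < l) (hl1 : l ≤ 1) :
    l * log (1 + x / l) ≤ log (1 + x) := by
  have hpos : 0 < 1 + x / l := by positivity
  rw [← log_rpow hpos]
  refine log_le_log (by positivity) ?_
  calc (1 + x / l) ^ l ≤ 1 + l * (x / l) :=
        rpow_one_add_le_one_add_mul_self (by linarith [div_nonneg hx hl0.le]) hl0.le hl1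
    _ = 1 + x := by field_simp

lemma mul_logb_one_add_inv_lt {S c l : ℝ} (hS : 0 ≤ S) (hc : 0 < c)
    (hl0 : 0 < l) (hl1 : l < 1) :
    l * logb 2 (1 + 1 / (l * S + c)) < logb 2 (1 + 1 / (S + c)) := by
  have hSc : 0 < S + c := by linarith
  have hlSc : l * (S + c) < l * S + c := by nlinarith
  calc l * logb 2 (1 + 1 / (l * S + c))
      < l * logb 2 (1 + 1 / (S + c) / l) := by
        refine mul_lt_mul_of_pos_left (logb_lt_logb one_lt_two (by positivity) ?_) hl0
        rw [div_div, mul_comm (S + c)]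
        gcongr
    _ ≤ logb 2 (1 + 1 / (S + c)) := by
        simp only [logb, ← mul_div_assoc]
        gcongr
        exact mul_log_one_add_div_le (by positivity) hl0 hl1.le

lemma mul_one_div_mul_logb_lt {a c S l : ℝ} (ha : 0 < a) (hc : 0 < c) (hS : 0 ≤ S)
    (hl0 : 0 < l) (hl1 : l < 1) :
    l * (1 / (a * logb 2 (1 + 1 / (S + c)))) <
      1 / (a * logb 2 (1 + 1 / (l * S + c))) := by
  have hlog_pos : ∀ t : ℝ, 0 < t → 0 < logb 2 (1 + 1 / t) := fun t ht =>
    logb_pos one_lt_two (by linarith [one_div_pos.mpr ht])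
  have h := mul_logb_one_add_inv_lt hS hc hl0 hl1
  rw [mul_one_div, div_lt_div_iff₀ (mul_pos ha (hlog_pos _ (by positivity)))
    (mul_pos ha (hlog_pos _ (by positivity)))]
  nlinarith

theorem stmt_3_general
    (n : ℕ)
    (J : Fin n → Finset ℕ) (hJ : ∀ i, (J i).Nonempty)
    (a c : Fin n → ℕ → ℝ) (b : Fin n → Fin n → ℕ → ℝ)
    (ha : ∀ i, ∀ j ∈ J i, 0 < a i j)
    (hc : ∀ i, ∀ j ∈ J i, 0 < c i j)
    (hb : ∀ i k, k ≠ i → ∀ j ∈ J i, 0 < b i k j)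
    (f : Fin n → (Fin n → ℝ) → ℝ)
    (hf : ∀ i ρ, f i ρ =
      ∑ j ∈ J i, 1 / (a i j * Real.logb 2
        (1 + 1 / (∑ k ∈ Finset.univ.erase i, b i k j * ρ k + c i j))))
    (i : Fin n) (ρ : Fin n → ℝ) (hρ : ∀ k, 0 ≤ ρ k)
    (hfix : f i ρ = ρ i)
    (l : ℝ) (hl0 : 0 < l) (hl1 : l < 1) :
    l * ρ i < f i (fun k => l * ρ k) := by
  rw [← hfix, hf i ρ, hf i (fun k => l * ρ k), Finset.mul_sum]
  refine Finset.sum_lt_sum_of_nonempty (hJ i) fun j hj => ?_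
  have hscale : ∑ k ∈ Finset.univ.erase i, b i k j * (l * ρ k)
      = l * ∑ k ∈ Finset.univ.erase i, b i k j * ρ k := by
    rw [Finset.mul_sum]
    exact Finset.sum_congr rfl fun k _ => by ring
  have hS : 0 ≤ ∑ k ∈ Finset.univ.erase i, b i k j * ρ k :=
    Finset.sum_nonneg fun k hk =>
      mul_nonneg (hb i k (Finset.ne_of_mem_erase hk) j hj).le (hρ k)
  rw [hscale]
  exact mul_one_div_mul_logb_lt (ha i j hj) (hc i j hj) hS hl0 hl1

/-- Strict radial quasiconcavity: if `f i ρ = ρ i` for a nonnegative `ρ`,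
then `f i (λ·ρ) > λ·ρ i` for every `λ ∈ (0,1)`. -/
theorem stmt_3
    (n : ℕ) (hn : 2 ≤ n)
    (J : Fin n → Finset ℕ) (hJ : ∀ i, (J i).Nonempty)
    (a c : Fin n → ℕ → ℝ) (b : Fin n → Fin n → ℕ → ℝ)
    (ha : ∀ i, ∀ j ∈ J i, 0 < a i j)
    (hc : ∀ i, ∀ j ∈ J i, 0 < c i j)
    (hb : ∀ i k, k ≠ i → ∀ j ∈ J i, 0 < b i k j)
    (f : Fin n → (Fin n → ℝ) → ℝ)
    (hf : ∀ i ρ, f i ρ =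
      ∑ j ∈ J i, 1 / (a i j * Real.logb 2
        (1 + 1 / (∑ k ∈ Finset.univ.erase i, b i k j * ρ k + c i j))))
    (i : Fin n) (ρ : Fin n → ℝ) (hρ : ∀ k, 0 ≤ ρ k)
    (hfix : f i ρ = ρ i)
    (l : ℝ) (hl0 : 0 < l) (hl1 : l < 1) :
    l * ρ i < f i (fun k => l * ρ k) :=
  stmt_3_general n J hJ a c b ha hc hb f hf i ρ hρ hfix l hl0 hl1
end

section
/- (Uniqueness) The load-coupling system has at most one nonnegative solution: if ρ¹ ≥ 0 and ρ² ≥ 0 both satisfy f_i(ρ) = ρ_i for every cell i, then ρ¹ = ρ². -/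
/-!
The load map is a standard interference function in the sense of Yates: positive, monotone and
strictly subhomogeneous (`f (l • ρ) < l * f ρ` for `l > 1`), the last by the strict Bernoulli
inequality applied to `log₂ (1 + 1 / x)`. For such maps a second fixed point would, at the cell
where the ratio of the two solutions is largest, give a strict inequality between equal numbers.
-/

open Finset Real

/-- Yates' standard interference functions, on the nonnegative orthant. -/
structure IsStandardInterference {ι : Type*} (F : ι → (ι → ℝ) → ℝ) : Prop where
  pos : ∀ ρ, 0 ≤ ρ → ∀ i, 0 < F i ρ
  mono : ∀ ρ σ, 0 ≤ ρ → ρ ≤ σ → ∀ i, F i ρ ≤ F i σ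
  lt_smul : ∀ ρ, 0 ≤ ρ → ∀ l : ℝ, 1 < l → ∀ i, F i (l • ρ) < l * F i ρ

namespace IsStandardInterference

variable {ι : Type*} [Finite ι] {F : ι → (ι → ℝ) → ℝ} {ρ₁ ρ₂ : ι → ℝ}

theorem le_of_fixedPoints (hF : IsStandardInterference F) (h₁ : 0 ≤ ρ₁) (h₂ : 0 ≤ ρ₂)
    (hρ₁ : ∀ i, F i ρ₁ = ρ₁ i) (hρ₂ : ∀ i, F i ρ₂ = ρ₂ i) : ρ₁ ≤ ρ₂ := by
  by_contra hle
  obtain ⟨i, hi⟩ : ∃ i, ρ₂ i < ρ₁ i := by simpa [Pi.le_def] using hle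
  have hpos : ∀ k, 0 < ρ₂ k := fun k => hρ₂ k ▸ hF.pos ρ₂ h₂ k
  have : Nonempty ι := ⟨i⟩
  obtain ⟨i₀, hi₀⟩ := Finite.exists_max fun k => ρ₁ k / ρ₂ k
  set l := ρ₁ i₀ / ρ₂ i₀
  have hl : 1 < l := ((one_lt_div (hpos i)).2 hi).trans_le (hi₀ i)
  have hratio : ρ₁ ≤ l • ρ₂ := fun k => (div_le_iff₀ (hpos k)).1 (hi₀ k)
  have hattained : l * ρ₂ i₀ = ρ₁ i₀ := div_mul_cancel₀ _ (hpos i₀).ne'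
  have := calc ρ₁ i₀ = F i₀ ρ₁ := (hρ₁ i₀).symm
    _ ≤ F i₀ (l • ρ₂) := hF.mono ρ₁ _ h₁ hratio i₀
    _ < l * F i₀ ρ₂ := hF.lt_smul ρ₂ h₂ l hl i₀
    _ = ρ₁ i₀ := by rw [hρ₂, hattained]
  exact this.false

theorem eq_of_fixedPoints (hF : IsStandardInterference F) (h₁ : 0 ≤ ρ₁) (h₂ : 0 ≤ ρ₂)
    (hρ₁ : ∀ i, F i ρ₁ = ρ₁ i) (hρ₂ : ∀ i, F i ρ₂ = ρ₂ i) : ρ₁ = ρ₂ :=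
  (hF.le_of_fixedPoints h₁ h₂ hρ₁ hρ₂).antisymm (hF.le_of_fixedPoints h₂ h₁ hρ₂ hρ₁)

end IsStandardInterference

section LogbOneAddOneDiv

variable {b x y l : ℝ}

theorem logb_one_add_one_div_pos (hb : 1 < b) (hx : 0 < x) : 0 < logb b (1 + 1 / x) :=
  logb_pos hb (by simpa using hx)

theorem logb_one_add_one_div_anti (hb : 1 < b) (hx : 0 < x) (hxy : x ≤ y) :
    logb b (1 + 1 / y) ≤ logb b (1 + 1 / x) := by
  have hy : 0 < y := hx.trans_le hxy
  exact logb_le_logb_of_le hb (by positivity) (by gcongr)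

/-- Strict Bernoulli: `1 + 1 / x = 1 + l * (1 / (l * x)) < (1 + 1 / (l * x)) ^ l`. -/
theorem logb_one_add_one_div_lt_mul (hb : 1 < b) (hx : 0 < x) (hl : 1 < l) :
    logb b (1 + 1 / x) < l * logb b (1 + 1 / (l * x)) := by
  have hlx : 0 < l * x := by nlinarith
  rw [← logb_rpow_eq_mul_logb_of_pos (by positivity)]
  refine logb_lt_logb hb (by positivity) ?_
  have hbern := one_add_mul_self_lt_rpow_one_add (s := 1 / (l * x))
    (by linarith [one_div_pos.2 hlx]) (one_div_pos.2 hlx).ne' hl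
  have hcancel : l * (1 / (l * x)) = 1 / x := by field_simp
  rwa [hcancel] at hbern

end LogbOneAddOneDiv

/-- The load that pixel `j` puts on its cell: `1 / (a * log₂ (1 + SINR))` with
`SINR = 1 / (S + c)`, where `S` is the interference from the other cells. -/
noncomputable def pixelLoad (a c S : ℝ) : ℝ := 1 / (a * logb 2 (1 + 1 / (S + c)))

section PixelLoad

variable {a c S T l : ℝ}

theorem pixelLoad_pos (ha : 0 < a) (hSc : 0 < S + c) : 0 < pixelLoad a c S := by
  have := logb_one_add_one_div_pos one_lt_two hSc
  unfold pixelLoad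
  positivity

theorem pixelLoad_le_pixelLoad (ha : 0 < a) (hc : 0 < c) (hS : 0 ≤ S) (hST : S ≤ T) :
    pixelLoad a c S ≤ pixelLoad a c T := by
  have hT := logb_one_add_one_div_pos one_lt_two (show 0 < T + c by linarith)
  exact one_div_le_one_div_of_le (by positivity) (mul_le_mul_of_nonneg_left
    (logb_one_add_one_div_anti one_lt_two (by linarith) (by linarith)) ha.le)

/-- Uses `l * S + c ≤ l * (S + c)`, so the strict scaling of `log₂ (1 + 1 / x)` survives the
unscaled noise term `c`. -/
theorem pixelLoad_mul_lt (ha : 0 < a) (hc : 0 < c) (hS : 0 ≤ S) (hl : 1 < l) :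
    pixelLoad a c (l * S) < l * pixelLoad a c S := by
  have hSc : 0 < S + c := by linarith
  have hlSc : 0 < l * S + c := by nlinarith
  have hpos := logb_one_add_one_div_pos one_lt_two hSc
  have hlpos := logb_one_add_one_div_pos one_lt_two hlSc
  have hlog : logb 2 (1 + 1 / (S + c)) < l * logb 2 (1 + 1 / (l * S + c)) :=
    calc logb 2 (1 + 1 / (S + c)) < l * logb 2 (1 + 1 / (l * (S + c))) :=
          logb_one_add_one_div_lt_mul one_lt_two hSc hl
      _ ≤ l * logb 2 (1 + 1 / (l * S + c)) :=
          mul_le_mul_of_nonneg_left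
            (logb_one_add_one_div_anti one_lt_two hlSc (by nlinarith)) (by linarith)
  unfold pixelLoad
  rw [mul_one_div, div_lt_div_iff₀ (by positivity) (by positivity)]
  nlinarith

end PixelLoad

section CellLoad

variable {ι κ : Type*} [Fintype ι] [DecidableEq ι]

noncomputable def cellLoad (J : ι → Finset κ) (a c : ι → κ → ℝ) (b : ι → ι → κ → ℝ)
    (i : ι) (ρ : ι → ℝ) : ℝ :=
  ∑ j ∈ J i, pixelLoad (a i j) (c i j) (∑ k ∈ univ.erase i, b i k j * ρ k)

theorem isStandardInterference_cellLoad {J : ι → Finset κ} {a c : ι → κ → ℝ}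
    {b : ι → ι → κ → ℝ} (hJ : ∀ i, (J i).Nonempty) (ha : ∀ i, ∀ j ∈ J i, 0 < a i j)
    (hc : ∀ i, ∀ j ∈ J i, 0 < c i j) (hb : ∀ i k, k ≠ i → ∀ j ∈ J i, 0 ≤ b i k j) :
    IsStandardInterference (cellLoad J a c b) := by
  have hS : ∀ ρ : ι → ℝ, 0 ≤ ρ → ∀ i, ∀ j ∈ J i, 0 ≤ ∑ k ∈ univ.erase i, b i k j * ρ k :=
    fun ρ hρ i j hj => sum_nonneg fun k hk => mul_nonneg (hb i k (ne_of_mem_erase hk) j hj) (hρ k)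
  refine ⟨fun ρ hρ i => ?_, fun ρ σ hρ hρσ i => ?_, fun ρ hρ l hl i => ?_⟩
  · exact sum_pos (fun j hj => pixelLoad_pos (ha i j hj)
      (add_pos_of_nonneg_of_pos (hS ρ hρ i j hj) (hc i j hj))) (hJ i)
  · refine sum_le_sum fun j hj => pixelLoad_le_pixelLoad (ha i j hj) (hc i j hj)
      (hS ρ hρ i j hj) (sum_le_sum fun k hk => ?_)
    exact mul_le_mul_of_nonneg_left (hρσ k) (hb i k (ne_of_mem_erase hk) j hj)
  · have hscale : ∀ j, ∑ k ∈ univ.erase i, b i k j * (l • ρ) k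
        = l * ∑ k ∈ univ.erase i, b i k j * ρ k := fun j => by
      rw [mul_sum]
      exact sum_congr rfl fun k _ => by rw [Pi.smul_apply, smul_eq_mul]; ring
    rw [cellLoad, cellLoad, mul_sum]
    simp only [hscale]
    exact sum_lt_sum_of_nonempty (hJ i) fun j hj =>
      pixelLoad_mul_lt (ha i j hj) (hc i j hj) (hS ρ hρ i j hj) hl

end CellLoad

theorem stmt_4_general
    (n : ℕ)
    (J : Fin n → Finset ℕ) (hJ : ∀ i, (J i).Nonempty)
    (a c : Fin n → ℕ → ℝ) (b : Fin n → Fin n → ℕ → ℝ)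
    (ha : ∀ i, ∀ j ∈ J i, 0 < a i j)
    (hc : ∀ i, ∀ j ∈ J i, 0 < c i j)
    (hb : ∀ i k, k ≠ i → ∀ j ∈ J i, 0 < b i k j)
    (f : Fin n → (Fin n → ℝ) → ℝ)
    (hf : ∀ i ρ, f i ρ =
      ∑ j ∈ J i, 1 / (a i j * Real.logb 2
        (1 + 1 / (∑ k ∈ Finset.univ.erase i, b i k j * ρ k + c i j))))
    (ρ₁ ρ₂ : Fin n → ℝ)
    (h₁ : ∀ i, 0 ≤ ρ₁ i) (h₂ : ∀ i, 0 ≤ ρ₂ i)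
    (hf₁ : ∀ i, f i ρ₁ = ρ₁ i) (hf₂ : ∀ i, f i ρ₂ = ρ₂ i) :
    ρ₁ = ρ₂ := by
  obtain rfl : f = cellLoad J a c b := funext₂ hf
  have hF := isStandardInterference_cellLoad hJ ha hc fun i k hki j hj => (hb i k hki j hj).le
  exact hF.eq_of_fixedPoints h₁ h₂ hf₁ hf₂

/-- Uniqueness: the load-coupling system `ρ = f(ρ)` has at most one
nonnegative solution. -/
theorem stmt_4
    (n : ℕ) (hn : 2 ≤ n)
    (J : Fin n → Finset ℕ) (hJ : ∀ i, (J i).Nonempty)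
    (a c : Fin n → ℕ → ℝ) (b : Fin n → Fin n → ℕ → ℝ)
    (ha : ∀ i, ∀ j ∈ J i, 0 < a i j)
    (hc : ∀ i, ∀ j ∈ J i, 0 < c i j)
    (hb : ∀ i k, k ≠ i → ∀ j ∈ J i, 0 < b i k j)
    (f : Fin n → (Fin n → ℝ) → ℝ)
    (hf : ∀ i ρ, f i ρ =
      ∑ j ∈ J i, 1 / (a i j * Real.logb 2
        (1 + 1 / (∑ k ∈ Finset.univ.erase i, b i k j * ρ k + c i j))))
    (ρ₁ ρ₂ : Fin n → ℝ)
    (h₁ : ∀ i, 0 ≤ ρ₁ i) (h₂ : ∀ i, 0 ≤ ρ₂ i)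
    (hf₁ : ∀ i, f i ρ₁ = ρ₁ i) (hf₂ : ∀ i, f i ρ₂ = ρ₂ i) :
    ρ₁ = ρ₂ :=
  stmt_4_general n J hJ a c b ha hc hb f hf ρ₁ ρ₂ h₁ h₂ hf₁ hf₂
end

section
/- (Existence of an optimal solution to the load-minimization problem) If there exists a nonnegative vector ρ̄ ∈ ℝ_{≥0}^n with f_i(ρ̄) ≤ ρ̄_i for every cell i, then the minimum of Σ_{i=1}^n ρ_i over the feasible set S = {ρ ∈ ℝ_{≥0}^n : f_i(ρ) ≤ ρ_i for all i} is attained: there exists ρ° ∈ S such that Σ_i ρ°_i ≤ Σ_i ρ_i for every ρ ∈ S. -/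
/-!
Each load function is continuous on the nonnegative orthant (the interference term stays
positive there, so no logarithm or division degenerates), hence the feasible set is closed.
On the orthant the total load is coercive: the sublevel set below the total load of `ρbar` lies
in a compact box. A continuous function on a closed set with a compact nonempty sublevel set
attains its minimum.
-/

open Set Filter

theorem exists_isMinOn_sum_of_isClosed {ι : Type*} [Fintype ι] {S : Set (ι → ℝ)}
    (hS : IsClosed S) (hS_nonneg : S ⊆ Ici 0) {x₀ : ι → ℝ} (h₀ : x₀ ∈ S) :
    ∃ x ∈ S, IsMinOn (fun ρ => ∑ i, ρ i) S x := by
  refine (continuous_finsetSum _ fun i _ => continuous_apply i).continuousOn.exists_isMinOn'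
    hS h₀ ?_
  -- Outside the box `[0, Σ x₀]ⁿ` some coordinate, hence the sum, exceeds `Σ x₀`.
  refine (hasBasis_cocompact.inf_principal S).eventually_iff.2
    ⟨Icc 0 fun _ => ∑ i, x₀ i, isCompact_Icc, fun x ⟨hxK, hxS⟩ => ?_⟩
  have hx : 0 ≤ x := hS_nonneg hxS
  obtain ⟨i, hi⟩ : ∃ i, ∑ i, x₀ i < x i := by
    simpa [mem_Icc, hx, Pi.le_def] using hxK
  exact hi.le.trans (Finset.single_le_sum (fun j _ => hx j) (Finset.mem_univ i))

theorem continuousOn_one_div_mul_logb_one_add_inv {a : ℝ} (ha : a ≠ 0) :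
    ContinuousOn (fun x : ℝ => 1 / (a * Real.logb 2 (1 + 1 / x))) (Ioi 0) := by
  intro x hx
  have hx : 0 < x := hx
  have hlog : 0 < Real.logb 2 (1 + 1 / x) := Real.logb_pos one_lt_two (by simp [hx])
  have hpos : 0 < 1 + 1 / x := by positivity
  have hinner : ContinuousAt (fun x : ℝ => 1 + 1 / x) x := by fun_prop (disch := exact hx.ne')
  exact (continuousAt_const.div (continuousAt_const.mul (hinner.logb hpos.ne'))
    (mul_ne_zero ha hlog.ne')).continuousWithinAt

theorem continuousOn_load {ι : Type*} [Fintype ι] [DecidableEq ι] (i : ι) (J : Finset ℕ)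
    (a c : ℕ → ℝ) (b : ι → ℕ → ℝ) (ha : ∀ j ∈ J, a j ≠ 0) (hc : ∀ j ∈ J, 0 < c j)
    (hb : ∀ k, k ≠ i → ∀ j ∈ J, 0 ≤ b k j) :
    ContinuousOn (fun ρ : ι → ℝ => ∑ j ∈ J, 1 / (a j * Real.logb 2
      (1 + 1 / (∑ k ∈ Finset.univ.erase i, b k j * ρ k + c j)))) (Ici 0) := by
  refine continuousOn_finsetSum _ fun j hj =>
    (continuousOn_one_div_mul_logb_one_add_inv (ha j hj)).comp
      (Continuous.continuousOn (by fun_prop)) fun ρ hρ => ?_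
  have : 0 ≤ ∑ k ∈ Finset.univ.erase i, b k j * ρ k :=
    Finset.sum_nonneg fun k hk => mul_nonneg (hb k (Finset.ne_of_mem_erase hk) j hj) (hρ k)
  exact add_pos_of_nonneg_of_pos this (hc j hj)

theorem stmt_5_general
    (n : ℕ)
    (J : Fin n → Finset ℕ)
    (a c : Fin n → ℕ → ℝ) (b : Fin n → Fin n → ℕ → ℝ)
    (ha : ∀ i, ∀ j ∈ J i, 0 < a i j)
    (hc : ∀ i, ∀ j ∈ J i, 0 < c i j)
    (hb : ∀ i k, k ≠ i → ∀ j ∈ J i, 0 < b i k j)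
    (f : Fin n → (Fin n → ℝ) → ℝ)
    (hf : ∀ i ρ, f i ρ =
      ∑ j ∈ J i, 1 / (a i j * Real.logb 2
        (1 + 1 / (∑ k ∈ Finset.univ.erase i, b i k j * ρ k + c i j))))
    (ρbar : Fin n → ℝ) (hbar : ∀ i, 0 ≤ ρbar i)
    (hfeas : ∀ i, f i ρbar ≤ ρbar i) :
    ∃ ρ₀ : Fin n → ℝ, (∀ i, 0 ≤ ρ₀ i) ∧ (∀ i, f i ρ₀ ≤ ρ₀ i) ∧
      ∀ ρ : Fin n → ℝ, (∀ i, 0 ≤ ρ i) → (∀ i, f i ρ ≤ ρ i) →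
        ∑ i, ρ₀ i ≤ ∑ i, ρ i := by
  have hf_cont : ContinuousOn (fun ρ i => f i ρ) (Ici 0) := continuousOn_pi.2 fun i => by
    simpa only [hf] using continuousOn_load i (J i) (a i) (c i) (b i)
      (fun j hj => (ha i j hj).ne') (hc i) fun k hk j hj => (hb i k hk j hj).le
  have hS : IsClosed {ρ ∈ Ici 0 | (fun i => f i ρ) ≤ ρ} :=
    isClosed_Ici.isClosed_le hf_cont continuousOn_id
  obtain ⟨ρ₀, ⟨hρ₀, hfeas₀⟩, hmin⟩ :=
    exists_isMinOn_sum_of_isClosed hS (fun _ hρ => hρ.1) (x₀ := ρbar) ⟨hbar, hfeas⟩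
  exact ⟨ρ₀, hρ₀, hfeas₀, fun ρ hρ hfρ => hmin ⟨hρ, hfρ⟩⟩

/-- If the feasible set `{ρ ≥ 0 : f(ρ) ≤ ρ}` is nonempty, then the total load
`Σ_i ρ_i` attains its minimum over this set. -/
theorem stmt_5
    (n : ℕ) (hn : 2 ≤ n)
    (J : Fin n → Finset ℕ) (hJ : ∀ i, (J i).Nonempty)
    (a c : Fin n → ℕ → ℝ) (b : Fin n → Fin n → ℕ → ℝ)
    (ha : ∀ i, ∀ j ∈ J i, 0 < a i j)
    (hc : ∀ i, ∀ j ∈ J i, 0 < c i j)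
    (hb : ∀ i k, k ≠ i → ∀ j ∈ J i, 0 < b i k j)
    (f : Fin n → (Fin n → ℝ) → ℝ)
    (hf : ∀ i ρ, f i ρ =
      ∑ j ∈ J i, 1 / (a i j * Real.logb 2
        (1 + 1 / (∑ k ∈ Finset.univ.erase i, b i k j * ρ k + c i j))))
    (ρbar : Fin n → ℝ) (hbar : ∀ i, 0 ≤ ρbar i)
    (hfeas : ∀ i, f i ρbar ≤ ρbar i) :
    ∃ ρ₀ : Fin n → ℝ, (∀ i, 0 ≤ ρ₀ i) ∧ (∀ i, f i ρ₀ ≤ ρ₀ i) ∧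
      ∀ ρ : Fin n → ℝ, (∀ i, 0 ≤ ρ i) → (∀ i, f i ρ ≤ ρ i) →
        ∑ i, ρ₀ i ≤ ∑ i, ρ i :=
  stmt_5_general n J a c b ha hc hb f hf ρbar hbar hfeas
end

section
/- (The asymptotic linearization under-estimates the load function) For every nonnegative vector ρ ∈ ℝ_{≥0}^n and every cell i, h⁰_i(ρ) ≤ f_i(ρ). -/
/-!
Write `L t = log (1 + 1/t)` and `s = ∑ₖ bₖ ρₖ`. Pixel `j` contributes `(log 2 / a) · L(s + c)⁻¹`
to `fᵢ(ρ)` and `(log 2 / a) · (L(c)⁻¹ + s)` to `h⁰ᵢ(ρ)`, so it suffices that `t ↦ L(t)⁻¹ - t` is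
nondecreasing on `(0, ∞)`. Its derivative `1 / (t (t + 1) L(t)²) - 1` is nonnegative because
`log x ≤ (x - 1) / √x` for `x ≥ 1`; with `x = y²` this is `2 log y ≤ y - 1/y`, whose two sides
agree at `y = 1` and whose difference has derivative `(1 - 1/y)² ≥ 0`.
-/

open Real Set

theorem IsOpen.monotoneOn_of_hasDerivAt_nonneg {D : Set ℝ} (hDo : IsOpen D) (hD : Convex ℝ D)
    {f f' : ℝ → ℝ} (hf : ∀ x ∈ D, HasDerivAt f (f' x) x) (hf' : ∀ x ∈ D, 0 ≤ f' x) :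
    MonotoneOn f D := by
  refine monotoneOn_of_hasDerivWithinAt_nonneg (f' := f') hD
    (fun x hx => (hf x hx).continuousAt.continuousWithinAt) ?_ ?_ <;> rw [hDo.interior_eq]
  · exact fun x hx => (hf x hx).hasDerivWithinAt
  · exact hf'

theorem two_mul_log_le_sub_inv {y : ℝ} (hy : 1 ≤ y) : 2 * log y ≤ y - y⁻¹ := by
  have mono : MonotoneOn (fun y : ℝ => y - y⁻¹ - 2 * log y) (Ioi 0) := by
    refine isOpen_Ioi.monotoneOn_of_hasDerivAt_nonneg (convex_Ioi 0) (f' := fun y => (1 - y⁻¹) ^ 2)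
      (fun y hy => ?_) fun y _ => sq_nonneg _
    have hy0 : y ≠ 0 := (mem_Ioi.mp hy).ne'
    refine (((hasDerivAt_id' y).sub (hasDerivAt_inv hy0)).sub
      ((hasDerivAt_log hy0).const_mul 2)).congr_deriv ?_
    field_simp
    ring
  have := mono (mem_Ioi.mpr one_pos) (mem_Ioi.mpr (by linarith)) hy
  simp only [inv_one, log_one] at this
  linarith

theorem sq_log_le_sq_sub_one_div {x : ℝ} (hx : 1 ≤ x) : log x ^ 2 ≤ (x - 1) ^ 2 / x := by
  have hx0 : 0 < x := by linarith
  have hy : 1 ≤ √x := one_le_sqrt.mpr hx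
  have hlog : log x = 2 * log √x := by
    rw [← log_rpow (sqrt_pos.mpr hx0), rpow_two, sq_sqrt hx0.le]
  have hsub : (x - 1) ^ 2 / x = (√x - (√x)⁻¹) ^ 2 := by
    field_simp
    rw [sq_sqrt hx0.le]
    ring
  rw [hlog, hsub]
  exact pow_le_pow_left₀ (mul_nonneg zero_le_two (log_nonneg hy)) (two_mul_log_le_sub_inv hy) 2

theorem monotoneOn_inv_log_one_add_inv_sub :
    MonotoneOn (fun t : ℝ => (log (1 + t⁻¹))⁻¹ - t) (Ioi 0) := by
  refine isOpen_Ioi.monotoneOn_of_hasDerivAt_nonneg (convex_Ioi 0)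
    (f' := fun t => (t⁻¹ ^ 2 / (1 + t⁻¹)) / log (1 + t⁻¹) ^ 2 - 1) (fun t ht => ?_) ?_
  · have ht0 : t ≠ 0 := (mem_Ioi.mp ht).ne'
    have hx : 1 < 1 + t⁻¹ := lt_add_of_pos_right 1 (inv_pos.mpr (mem_Ioi.mp ht))
    refine ((((hasDerivAt_inv ht0).const_add 1).log (by positivity)).inv (log_pos hx).ne'
      |>.sub (hasDerivAt_id' t)).congr_deriv ?_
    field_simp
  · intro t ht
    have ht' : 0 < t⁻¹ := inv_pos.mpr (mem_Ioi.mp ht)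
    have hL : 0 < log (1 + t⁻¹) := log_pos (by linarith)
    have hsq := sq_log_le_sq_sub_one_div (x := 1 + t⁻¹) (by linarith)
    rw [add_sub_cancel_left] at hsq
    rw [sub_nonneg, one_le_div (pow_pos hL 2)]
    exact hsq

theorem inv_log_one_add_inv_add_le {c s : ℝ} (hc : 0 < c) (hs : 0 ≤ s) :
    (log (1 + c⁻¹))⁻¹ + s ≤ (log (1 + (s + c)⁻¹))⁻¹ := by
  have := monotoneOn_inv_log_one_add_inv_sub (mem_Ioi.mpr hc)
    (mem_Ioi.mpr (by linarith : 0 < s + c)) (by linarith)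
  simp only at this
  linarith

theorem one_div_mul_logb_add_le {a c s : ℝ} (ha : 0 < a) (hc : 0 < c) (hs : 0 ≤ s) :
    1 / (a * logb 2 (1 + 1 / c)) + log 2 / a * s ≤ 1 / (a * logb 2 (1 + 1 / (s + c))) := by
  have hrewrite : ∀ x, 1 / (a * logb 2 (1 + 1 / x)) = log 2 / a * (log (1 + x⁻¹))⁻¹ := by
    intro x
    rw [logb, one_div x]
    field_simp
  rw [hrewrite, hrewrite, ← mul_add]
  exact mul_le_mul_of_nonneg_left (inv_log_one_add_inv_add_le hc hs) (by positivity)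

theorem stmt_7_general
    (n : ℕ)
    (J : Fin n → Finset ℕ)
    (a c : Fin n → ℕ → ℝ) (b : Fin n → Fin n → ℕ → ℝ)
    (ha : ∀ i, ∀ j ∈ J i, 0 < a i j)
    (hc : ∀ i, ∀ j ∈ J i, 0 < c i j)
    (hb : ∀ i k, k ≠ i → ∀ j ∈ J i, 0 < b i k j)
    (f : Fin n → (Fin n → ℝ) → ℝ)
    (hf : ∀ i ρ, f i ρ =
      ∑ j ∈ J i, 1 / (a i j * Real.logb 2
        (1 + 1 / (∑ k ∈ Finset.univ.erase i, b i k j * ρ k + c i j))))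
    (H : Fin n → Fin n → ℝ)
    (hH : ∀ i k, H i k = Real.log 2 * ∑ j ∈ J i, b i k j / a i j)
    (h0 : Fin n → (Fin n → ℝ) → ℝ)
    (hh0 : ∀ i ρ, h0 i ρ =
      f i 0 + ∑ k ∈ Finset.univ.erase i, H i k * ρ k)
    (ρ : Fin n → ℝ) (hρ : ∀ k, 0 ≤ ρ k) (i : Fin n) :
    h0 i ρ ≤ f i ρ := by
  have hlinear : ∑ k ∈ Finset.univ.erase i, H i k * ρ k =
      ∑ j ∈ J i, log 2 / a i j * ∑ k ∈ Finset.univ.erase i, b i k j * ρ k := by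
    simp only [hH, Finset.mul_sum, Finset.sum_mul]
    rw [Finset.sum_comm]
    exact Finset.sum_congr rfl fun j _ => Finset.sum_congr rfl fun k _ => by ring
  rw [hh0, hf, hf, hlinear, ← Finset.sum_add_distrib]
  simp only [Pi.zero_apply, mul_zero, Finset.sum_const_zero, zero_add]
  exact Finset.sum_le_sum fun j hj => one_div_mul_logb_add_le (ha i j hj) (hc i j hj)
    (Finset.sum_nonneg fun k hk => mul_nonneg (hb i k (Finset.ne_of_mem_erase hk) j hj).le (hρ k))

/-- The asymptotic linearization `h⁰` under-estimates the load function: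
`h⁰ i ρ ≤ f i ρ` for every nonnegative `ρ` and every cell `i`. -/
theorem stmt_7
    (n : ℕ) (hn : 2 ≤ n)
    (J : Fin n → Finset ℕ) (hJ : ∀ i, (J i).Nonempty)
    (a c : Fin n → ℕ → ℝ) (b : Fin n → Fin n → ℕ → ℝ)
    (ha : ∀ i, ∀ j ∈ J i, 0 < a i j)
    (hc : ∀ i, ∀ j ∈ J i, 0 < c i j)
    (hb : ∀ i k, k ≠ i → ∀ j ∈ J i, 0 < b i k j)
    (f : Fin n → (Fin n → ℝ) → ℝ)
    (hf : ∀ i ρ, f i ρ =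
      ∑ j ∈ J i, 1 / (a i j * Real.logb 2
        (1 + 1 / (∑ k ∈ Finset.univ.erase i, b i k j * ρ k + c i j))))
    (H : Fin n → Fin n → ℝ)
    (hH : ∀ i k, H i k = Real.log 2 * ∑ j ∈ J i, b i k j / a i j)
    (h0 : Fin n → (Fin n → ℝ) → ℝ)
    (hh0 : ∀ i ρ, h0 i ρ =
      f i 0 + ∑ k ∈ Finset.univ.erase i, H i k * ρ k)
    (ρ : Fin n → ℝ) (hρ : ∀ k, 0 ≤ ρ k) (i : Fin n) :
    h0 i ρ ≤ f i ρ :=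
  stmt_7_general n J a c b ha hc hb f hf H hH h0 hh0 ρ hρ i
end

section
/- For every real number u > 0, one has u·(u+1)·(ln(1 + 1/u))² < 1. -/
/-! With `t = 1 + 1/u` and `y = (log t) / 2`, the identity `cosh (2y) = 1 + 2 sinh² y` gives
`4 sinh² y = (t - 1)² / t = 1 / (u (u + 1))`, while `|y| < |sinh y|` since `y ≠ 0`. This is the
logarithmic–geometric mean inequality `|log t| < |t - 1| / √t`. -/

open Real

theorem Real.log_sq_lt_sub_one_sq_div {t : ℝ} (ht : 0 < t) (ht1 : t ≠ 1) :
    log t ^ 2 < (t - 1) ^ 2 / t := by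
  set y := log t / 2
  have hy : y ≠ 0 := div_ne_zero (log_ne_zero_of_pos_of_ne_one ht ht1) two_ne_zero
  have hsinh : 4 * sinh y ^ 2 = (t - 1) ^ 2 / t := by
    have hcosh : cosh (2 * y) = (t + t⁻¹) / 2 := by
      rw [mul_div_cancel₀ _ two_ne_zero, cosh_log ht]
    rw [cosh_two_mul, cosh_sq] at hcosh
    field_simp at hcosh ⊢
    linear_combination hcosh
  have hlt : y ^ 2 < sinh y ^ 2 := by
    rw [← sq_abs, ← sq_abs (sinh y), abs_sinh]
    exact pow_lt_pow_left₀ (self_lt_sinh_iff.mpr (abs_pos.mpr hy)) (abs_nonneg y) two_ne_zero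
  calc log t ^ 2 = 4 * y ^ 2 := by ring
    _ < 4 * sinh y ^ 2 := by linarith
    _ = (t - 1) ^ 2 / t := hsinh

/-- For every `u > 0`, `u·(u+1)·(ln(1+1/u))² < 1`. -/
theorem stmt_9 (u : ℝ) (hu : 0 < u) :
    u * (u + 1) * (Real.log (1 + 1 / u)) ^ 2 < 1 := by
  have ht : 0 < 1 + 1 / u := by positivity
  have ht1 : 1 + 1 / u ≠ 1 := by simp [hu.ne']
  calc u * (u + 1) * log (1 + 1 / u) ^ 2
      < u * (u + 1) * ((1 + 1 / u - 1) ^ 2 / (1 + 1 / u)) := by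
        gcongr
        exact log_sq_lt_sub_one_sq_div ht ht1
    _ = 1 := by field_simp; ring
end

section
/- (Necessary condition and lower bound) If the load-coupling system has a nonnegative solution ρ* (i.e. ρ* ≥ 0 and f_i(ρ*) = ρ*_i for all i), then the linear system ρ = h⁰(ρ) has a nonnegative solution; moreover, there exists a nonnegative solution ρ⁰ of ρ = h⁰(ρ) with ρ⁰_i ≤ ρ*_i for every cell i. -/
/-!
The derivative of `y ↦ 1 / ln (1 + 1/y) - y` is nonnegative on `(0, ∞)` (this is `t ≤ sinh t`
with `t = ln (1 + 1/y) / 2`), which gives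
`1 / log₂ (1 + 1/(x + s)) ≥ 1 / log₂ (1 + 1/x) + ln 2 · s`. Summed over the pixels of a cell this
says `h⁰(ρ*) ≤ f(ρ*) = ρ*`. As `h⁰` is monotone and `h⁰(0) ≥ 0`, it maps the order interval
`[0, ρ*]` into itself, and Knaster–Tarski gives a fixed point there.
-/

open Real Set Function

theorem exists_isFixedPt_mem_Icc {α : Type*} [ConditionallyCompleteLattice α] {f : α → α}
    {a b : α} (hf : MonotoneOn f (Icc a b)) (hab : a ≤ b) (ha : a ≤ f a) (hb : f b ≤ b) :
    ∃ x ∈ Icc a b, IsFixedPt f x := by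
  have : Fact (a ≤ b) := ⟨hab⟩
  have hmaps : MapsTo f (Icc a b) (Icc a b) := fun x hx =>
    ⟨ha.trans (hf (left_mem_Icc.2 hab) hx hx.1), (hf hx (right_mem_Icc.2 hab) hx.2).trans hb⟩
  let g : Icc a b →o Icc a b := ⟨hmaps.restrict, fun x y hxy => hf x.2 y.2 hxy⟩
  exact ⟨g.lfp, g.lfp.2, congrArg Subtype.val g.isFixedPt_lfp⟩

theorem log_one_add_inv_sq_le {y : ℝ} (hy : 0 < y) : log (1 + y⁻¹) ^ 2 ≤ (y * (y + 1))⁻¹ := by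
  set L := log (1 + y⁻¹)
  have hL : 0 ≤ L := log_nonneg (by simp [hy.le])
  have hsinh : L / 2 ≤ sinh (L / 2) := self_le_sinh_iff.2 (by positivity)
  have hexp : exp (L / 2) ^ 2 = 1 + y⁻¹ := by
    rw [← exp_nat_mul, Nat.cast_ofNat, mul_div_cancel₀ _ two_ne_zero, exp_log (by positivity)]
  rw [sinh_eq, exp_neg] at hsinh
  have hsq : L ^ 2 ≤ (exp (L / 2) - (exp (L / 2))⁻¹) ^ 2 :=
    pow_le_pow_left₀ hL (by linarith) 2
  refine hsq.trans (le_of_eq ?_)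
  have hpos : 0 < exp (L / 2) := exp_pos _
  field_simp
  rw [hexp]
  field_simp
  ring

theorem hasDerivAt_inv_log_one_add_inv {y : ℝ} (hy : 0 < y) :
    HasDerivAt (fun y => (log (1 + y⁻¹))⁻¹) ((y * (y + 1))⁻¹ / log (1 + y⁻¹) ^ 2) y := by
  have hL : log (1 + y⁻¹) ≠ 0 := (log_pos (by simp [hy])).ne'
  refine (((hasDerivAt_inv hy.ne').const_add 1).log (by positivity)).fun_inv hL |>.congr_deriv ?_
  field_simp

theorem monotoneOn_inv_log_one_add_inv_sub_self :
    MonotoneOn (fun y => (log (1 + y⁻¹))⁻¹ - y) (Ioi 0) := by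
  have hderiv (y : ℝ) (hy : y ∈ Ioi 0) :=
    (hasDerivAt_inv_log_one_add_inv hy).fun_sub (hasDerivAt_id' y)
  refine monotoneOn_of_hasDerivWithinAt_nonneg (convex_Ioi 0)
    (fun y hy => (hderiv y hy).continuousAt.continuousWithinAt)
    (fun y hy => (hderiv y (interior_subset hy)).hasDerivWithinAt) (fun y hy => ?_)
  rw [interior_Ioi, mem_Ioi] at hy
  have hL : 0 < log (1 + y⁻¹) := log_pos (by simp [hy])
  rw [sub_nonneg, one_le_div (by positivity)]
  exact log_one_add_inv_sq_le hy

theorem inv_logb_one_add_inv_add_mul_le {β x s : ℝ} (hβ : 1 ≤ β) (hx : 0 < x) (hs : 0 ≤ s) :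
    (logb β (1 + x⁻¹))⁻¹ + log β * s ≤ (logb β (1 + (s + x)⁻¹))⁻¹ := by
  have h := monotoneOn_inv_log_one_add_inv_sub_self hx (show 0 < s + x by linarith)
    (le_add_of_nonneg_left hs)
  simp only [logb, inv_div]
  rw [div_eq_mul_inv, div_eq_mul_inv, ← mul_add]
  exact mul_le_mul_of_nonneg_left (by linarith) (log_nonneg hβ)

theorem sum_inv_mul_logb_add_le {ι κ : Type*} (J : Finset ι) (K : Finset κ) {β : ℝ}
    (hβ : 1 ≤ β) {a c : ι → ℝ} {b : κ → ι → ℝ} {ρ : κ → ℝ} (ha : ∀ j ∈ J, 0 ≤ a j)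
    (hc : ∀ j ∈ J, 0 < c j) (hb : ∀ k ∈ K, ∀ j ∈ J, 0 ≤ b k j) (hρ : ∀ k ∈ K, 0 ≤ ρ k) :
    ∑ j ∈ J, (a j * logb β (1 + (c j)⁻¹))⁻¹ + ∑ k ∈ K, log β * (∑ j ∈ J, b k j / a j) * ρ k ≤
      ∑ j ∈ J, (a j * logb β (1 + (∑ k ∈ K, b k j * ρ k + c j)⁻¹))⁻¹ := by
  have hswap : ∑ k ∈ K, log β * (∑ j ∈ J, b k j / a j) * ρ k =
      ∑ j ∈ J, (a j)⁻¹ * (log β * ∑ k ∈ K, b k j * ρ k) := by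
    simp only [Finset.mul_sum, Finset.sum_mul]
    rw [Finset.sum_comm]
    refine Finset.sum_congr rfl fun j _ => Finset.sum_congr rfl fun k _ => ?_
    ring
  rw [hswap, ← Finset.sum_add_distrib]
  refine Finset.sum_le_sum fun j hj => ?_
  have hS : 0 ≤ ∑ k ∈ K, b k j * ρ k :=
    Finset.sum_nonneg fun k hk => mul_nonneg (hb k hk j hj) (hρ k hk)
  rw [mul_inv, mul_inv, ← mul_add]
  exact mul_le_mul_of_nonneg_left (inv_logb_one_add_inv_add_mul_le hβ (hc j hj) hS)
    (inv_nonneg.2 (ha j hj))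

theorem stmt_11_general
    (n : ℕ)
    (J : Fin n → Finset ℕ)
    (a c : Fin n → ℕ → ℝ) (b : Fin n → Fin n → ℕ → ℝ)
    (ha : ∀ i, ∀ j ∈ J i, 0 < a i j)
    (hc : ∀ i, ∀ j ∈ J i, 0 < c i j)
    (hb : ∀ i k, k ≠ i → ∀ j ∈ J i, 0 < b i k j)
    (f : Fin n → (Fin n → ℝ) → ℝ)
    (hf : ∀ i ρ, f i ρ =
      ∑ j ∈ J i, 1 / (a i j * Real.logb 2
        (1 + 1 / (∑ k ∈ Finset.univ.erase i, b i k j * ρ k + c i j))))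
    (H : Fin n → Fin n → ℝ)
    (hH : ∀ i k, H i k = Real.log 2 * ∑ j ∈ J i, b i k j / a i j)
    (h0 : Fin n → (Fin n → ℝ) → ℝ)
    (hh0 : ∀ i ρ, h0 i ρ =
      f i 0 + ∑ k ∈ Finset.univ.erase i, H i k * ρ k)
    (ρstar : Fin n → ℝ) (hρstar : ∀ i, 0 ≤ ρstar i)
    (hfix : ∀ i, f i ρstar = ρstar i) :
    ∃ ρ₀ : Fin n → ℝ, (∀ i, 0 ≤ ρ₀ i) ∧ (∀ i, h0 i ρ₀ = ρ₀ i) ∧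
      ∀ i, ρ₀ i ≤ ρstar i := by
  have hH_nonneg (i k : Fin n) (hk : k ∈ Finset.univ.erase i) : 0 ≤ H i k := by
    rw [hH]
    exact mul_nonneg (log_nonneg one_le_two) <| Finset.sum_nonneg fun j hj =>
      (div_pos (hb i k (Finset.ne_of_mem_erase hk) j hj) (ha i j hj)).le
  have h0_mono : Monotone fun ρ i => h0 i ρ := fun ρ σ hρσ i => by
    simp only [hh0]
    gcongr with k hk
    exacts [hH_nonneg i k hk, hρσ k]
  have h0_zero : 0 ≤ fun i => h0 i 0 := fun i => by
    simp only [hh0, hf, Pi.zero_apply, mul_zero, Finset.sum_const_zero, zero_add, add_zero,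
      one_div]
    exact Finset.sum_nonneg fun j hj => inv_nonneg.2 <| mul_nonneg (ha i j hj).le <|
      logb_nonneg one_lt_two (by simp [(hc i j hj).le])
  have h0_star : (fun i => h0 i ρstar) ≤ ρstar := fun i => by
    refine le_of_le_of_eq ?_ (hfix i)
    simp only [hh0, hf, hH, Pi.zero_apply, mul_zero, Finset.sum_const_zero, zero_add, one_div]
    exact sum_inv_mul_logb_add_le _ _ one_le_two (fun j hj => (ha i j hj).le) (hc i)
      (fun k hk j hj => (hb i k (Finset.ne_of_mem_erase hk) j hj).le) fun k _ => hρstar k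
  obtain ⟨ρ₀, ⟨hρ₀_nonneg, hρ₀_le⟩, hρ₀_fix⟩ :=
    exists_isFixedPt_mem_Icc (h0_mono.monotoneOn _) hρstar h0_zero h0_star
  exact ⟨ρ₀, hρ₀_nonneg, fun i => congrFun hρ₀_fix i, hρ₀_le⟩

/-- Necessary condition and lower bound: if the load-coupling system has a
nonnegative solution `ρ*`, then the linear system `ρ = h⁰(ρ)` has a
nonnegative solution, which moreover bounds `ρ*` from below. -/
theorem stmt_11
    (n : ℕ) (hn : 2 ≤ n)
    (J : Fin n → Finset ℕ) (hJ : ∀ i, (J i).Nonempty)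
    (a c : Fin n → ℕ → ℝ) (b : Fin n → Fin n → ℕ → ℝ)
    (ha : ∀ i, ∀ j ∈ J i, 0 < a i j)
    (hc : ∀ i, ∀ j ∈ J i, 0 < c i j)
    (hb : ∀ i k, k ≠ i → ∀ j ∈ J i, 0 < b i k j)
    (f : Fin n → (Fin n → ℝ) → ℝ)
    (hf : ∀ i ρ, f i ρ =
      ∑ j ∈ J i, 1 / (a i j * Real.logb 2
        (1 + 1 / (∑ k ∈ Finset.univ.erase i, b i k j * ρ k + c i j))))
    (H : Fin n → Fin n → ℝ)
    (hH : ∀ i k, H i k = Real.log 2 * ∑ j ∈ J i, b i k j / a i j)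
    (h0 : Fin n → (Fin n → ℝ) → ℝ)
    (hh0 : ∀ i ρ, h0 i ρ =
      f i 0 + ∑ k ∈ Finset.univ.erase i, H i k * ρ k)
    (ρstar : Fin n → ℝ) (hρstar : ∀ i, 0 ≤ ρstar i)
    (hfix : ∀ i, f i ρstar = ρstar i) :
    ∃ ρ₀ : Fin n → ℝ, (∀ i, 0 ≤ ρ₀ i) ∧ (∀ i, h0 i ρ₀ = ρ₀ i) ∧
      ∀ i, ρ₀ i ≤ ρstar i :=
  stmt_11_general n J a c b ha hc hb f hf H hH h0 hh0 ρstar hρstar hfix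
end

section
/- Let ρ̄ ∈ ℝ^n have all components strictly positive and let ε > 0. Then for every cell i, the difference h^ε_i(λ·ρ̄) − f_i(λ·ρ̄) tends to +∞ as λ → ∞. -/
/-! From `log y ≥ 1 - 1/y` at `y = 1 + 1/x` one gets `log₂(1 + 1/x) ≥ 1 / (ln 2 · (x + 1))`, so each
pixel's load is at most affine in the interference: `f_i(ρ) ≤ Σ_{k≠i} H_{ik} ρ_k + C_i` for `ρ ≥ 0`,
with `C_i = ln 2 · Σ_j (c_{ij} + 1) / a_{ij}`. Hence `h^ε_i(λρ̄) − f_i(λρ̄) ≥ f_i(0) − C_i + ελ Σ_{k≠i} ρ̄_k`,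
which grows linearly in `λ` because `n ≥ 2` makes the last sum positive. -/

open Finset Filter Real

lemma one_div_add_one_le_log_one_add_one_div {x : ℝ} (hx : 0 < x) :
    1 / (x + 1) ≤ log (1 + 1 / x) := by
  have hy : 0 < 1 + 1 / x := by positivity
  calc 1 / (x + 1) = 1 - (1 + 1 / x)⁻¹ := by field_simp; ring
    _ ≤ log (1 + 1 / x) := one_sub_inv_le_log_of_pos hy

lemma one_div_mul_logb_two_le {a x : ℝ} (ha : 0 < a) (hx : 0 < x) :
    1 / (a * logb 2 (1 + 1 / x)) ≤ log 2 * (x + 1) / a := by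
  have hlog2 : 0 < log 2 := log_pos one_lt_two
  have hL := one_div_add_one_le_log_one_add_one_div hx
  have hLpos : 0 < log (1 + 1 / x) := lt_of_lt_of_le (by positivity) hL
  have hprod : 1 ≤ (x + 1) * log (1 + 1 / x) := by
    rwa [div_le_iff₀' (by positivity)] at hL
  rw [logb, div_le_div_iff₀ (by positivity) ha]
  calc 1 * a ≤ a * ((x + 1) * log (1 + 1 / x)) := by nlinarith
    _ = log 2 * (x + 1) * (a * (log (1 + 1 / x) / log 2)) := by field_simp

lemma sum_load_le_affine {ι κ : Type*} {J : Finset ι} {K : Finset κ}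
    {a c : ι → ℝ} {b : κ → ι → ℝ} {ρ : κ → ℝ}
    (ha : ∀ j ∈ J, 0 < a j) (hc : ∀ j ∈ J, 0 < c j)
    (hb : ∀ k ∈ K, ∀ j ∈ J, 0 ≤ b k j) (hρ : ∀ k ∈ K, 0 ≤ ρ k) :
    ∑ j ∈ J, 1 / (a j * logb 2 (1 + 1 / (∑ k ∈ K, b k j * ρ k + c j))) ≤
      ∑ k ∈ K, log 2 * (∑ j ∈ J, b k j / a j) * ρ k + ∑ j ∈ J, log 2 * (c j + 1) / a j := by
  have hx : ∀ j ∈ J, 0 < ∑ k ∈ K, b k j * ρ k + c j := fun j hj =>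
    add_pos_of_nonneg_of_pos
      (sum_nonneg fun k hk => mul_nonneg (hb k hk j hj) (hρ k hk)) (hc j hj)
  calc _ ≤ ∑ j ∈ J, log 2 * ((∑ k ∈ K, b k j * ρ k + c j) + 1) / a j :=
        sum_le_sum fun j hj => one_div_mul_logb_two_le (ha j hj) (hx j hj)
    _ = ∑ j ∈ J, ∑ k ∈ K, log 2 * (b k j / a j) * ρ k + ∑ j ∈ J, log 2 * (c j + 1) / a j := by
        rw [← sum_add_distrib]
        refine sum_congr rfl fun j _ => ?_
        rw [add_assoc, mul_add, add_div, mul_sum, sum_div]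
        congr 1
        exact sum_congr rfl fun k _ => by ring
    _ = _ := by
        rw [sum_comm]
        simp only [mul_sum, sum_mul]

theorem stmt_13_general
    (n : ℕ) (hn : 2 ≤ n)
    (J : Fin n → Finset ℕ)
    (a c : Fin n → ℕ → ℝ) (b : Fin n → Fin n → ℕ → ℝ)
    (ha : ∀ i, ∀ j ∈ J i, 0 < a i j)
    (hc : ∀ i, ∀ j ∈ J i, 0 < c i j)
    (hb : ∀ i k, k ≠ i → ∀ j ∈ J i, 0 < b i k j)
    (f : Fin n → (Fin n → ℝ) → ℝ)
    (hf : ∀ i ρ, f i ρ =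
      ∑ j ∈ J i, 1 / (a i j * Real.logb 2
        (1 + 1 / (∑ k ∈ Finset.univ.erase i, b i k j * ρ k + c i j))))
    (H : Fin n → Fin n → ℝ)
    (hH : ∀ i k, H i k = Real.log 2 * ∑ j ∈ J i, b i k j / a i j)
    (ρbar : Fin n → ℝ) (hbar : ∀ i, 0 < ρbar i)
    (ε : ℝ) (hε : 0 < ε) (i : Fin n) :
    Filter.Tendsto (fun l : ℝ =>
        (f i 0 + ∑ k ∈ Finset.univ.erase i, (H i k + ε) * (l * ρbar k))
          - f i (fun k => l * ρbar k))
      Filter.atTop Filter.atTop := by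
  set S := ∑ k ∈ univ.erase i, ρbar k
  have hS : 0 < S := by
    have : Nontrivial (Fin n) := Fin.nontrivial_iff_two_le.mpr hn
    obtain ⟨k, hk⟩ := exists_ne i
    exact sum_pos (fun k _ => hbar k) ⟨k, mem_erase.mpr ⟨hk, mem_univ k⟩⟩
  set C := ∑ j ∈ J i, log 2 * (c i j + 1) / a i j
  have hlower : ∀ᶠ l in atTop, f i 0 - C + ε * S * l ≤
      (f i 0 + ∑ k ∈ univ.erase i, (H i k + ε) * (l * ρbar k)) - f i (fun k => l * ρbar k) := by
    filter_upwards [eventually_ge_atTop 0] with l hl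
    have hload : f i (fun k => l * ρbar k) ≤ ∑ k ∈ univ.erase i, H i k * (l * ρbar k) + C := by
      simp only [hf, hH]
      exact sum_load_le_affine (ha i) (hc i)
        (fun k hk j hj => (hb i k (ne_of_mem_erase hk) j hj).le)
        (fun k _ => mul_nonneg hl (hbar k).le)
    have hsplit : ∑ k ∈ univ.erase i, (H i k + ε) * (l * ρbar k) =
        ∑ k ∈ univ.erase i, H i k * (l * ρbar k) + ε * S * l := by
      rw [mul_sum, sum_mul, ← sum_add_distrib]
      exact sum_congr rfl fun k _ => by ring
    linarith
  exact tendsto_atTop_mono' _ hlower <|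
    tendsto_atTop_add_const_left _ _ (tendsto_id.const_mul_atTop (by positivity))

/-- For strictly positive `ρ̄` and any `ε > 0`, the difference
`h^ε_i(λ·ρ̄) − f_i(λ·ρ̄)` tends to `+∞` as `λ → ∞`. -/
theorem stmt_13
    (n : ℕ) (hn : 2 ≤ n)
    (J : Fin n → Finset ℕ) (hJ : ∀ i, (J i).Nonempty)
    (a c : Fin n → ℕ → ℝ) (b : Fin n → Fin n → ℕ → ℝ)
    (ha : ∀ i, ∀ j ∈ J i, 0 < a i j)
    (hc : ∀ i, ∀ j ∈ J i, 0 < c i j)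
    (hb : ∀ i k, k ≠ i → ∀ j ∈ J i, 0 < b i k j)
    (f : Fin n → (Fin n → ℝ) → ℝ)
    (hf : ∀ i ρ, f i ρ =
      ∑ j ∈ J i, 1 / (a i j * Real.logb 2
        (1 + 1 / (∑ k ∈ Finset.univ.erase i, b i k j * ρ k + c i j))))
    (H : Fin n → Fin n → ℝ)
    (hH : ∀ i k, H i k = Real.log 2 * ∑ j ∈ J i, b i k j / a i j)
    (h0 : Fin n → (Fin n → ℝ) → ℝ)
    (hh0 : ∀ i ρ, h0 i ρ =
      f i 0 + ∑ k ∈ Finset.univ.erase i, H i k * ρ k)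
    (ρbar : Fin n → ℝ) (hbar : ∀ i, 0 < ρbar i)
    (ε : ℝ) (hε : 0 < ε) (i : Fin n) :
    Filter.Tendsto (fun l : ℝ =>
        (f i 0 + ∑ k ∈ Finset.univ.erase i, (H i k + ε) * (l * ρbar k))
          - f i (fun k => l * ρbar k))
      Filter.atTop Filter.atTop :=
  stmt_13_general n hn J a c b ha hc hb f hf H hH ρbar hbar ε hε i
end
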